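/- A prime implication filter P of an MV-algebra is a minimal prime filter if and only if ℓ(P) = P, where ℓ(P) is the implication filter generated by {x → p : p ∈ P, x ∉ P}. -/

import Mathlib

/-- An MV-algebra `(α, ⊕, ¬, 0)` with the standard axioms. -/
class MV (α : Type*) extends Add α, Neg α, Zero α where
  add_assoc : ∀ a b c : α, a + (b + c) = (a + b) + c
  add_comm : ∀ a b : α, a + b = b + a
  add_zero : ∀ a : α, a + 0 = a
  neg_neg : ∀ a : α, - -a = a
  add_neg_zero : ∀ a : α, a + -(0 : α) = -(0 : α)
  luk : ∀ a b : α, -(-a + b) + b = -(-b + a) + a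

namespace MV

variable {α : Type*} [MV α]

/-- The top element `1 = ¬0`. -/
def one (α : Type*) [MV α] : α := -(0 : α)

/-- Implication `x → y = ¬x ⊕ y`. -/
def imp (a b : α) : α := -a + b

/-- Strong conjunction `x ⊗ y = ¬(¬x ⊕ ¬y)`. -/
def otimes (a b : α) : α := -(-a + -b)

/-- Join `x ∨ y = (x → y) → y`. -/
def sup (a b : α) : α := imp (imp a b) b

/-- Meet `x ∧ y = ¬(¬x ∨ ¬y)`. -/
def inf (a b : α) : α := -(sup (-a) (-b))

/-- Order: `x ≤ y` iff `x → y = 1`. -/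
def le (a b : α) : Prop := imp a b = one α

/-- Strict order. -/
def lt (a b : α) : Prop := le a b ∧ a ≠ b

/-- `n`-fold `⊗`-power. -/
def pow (a : α) : ℕ → α
  | 0 => one α
  | n + 1 => otimes a (pow a n)

/-- An implication filter: a lattice filter closed under `⊗`. -/
def IsImpFilter (F : Set α) : Prop :=
  one α ∈ F ∧ (∀ x ∈ F, ∀ y : α, le x y → y ∈ F) ∧
    (∀ x ∈ F, ∀ y ∈ F, inf x y ∈ F) ∧ (∀ x ∈ F, ∀ y ∈ F, otimes x y ∈ F)

/-- A prime implication filter: proper and `x ∨ y ∈ F → x ∈ F ∨ y ∈ F`. -/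
def IsPrime (F : Set α) : Prop :=
  IsImpFilter F ∧ F ≠ Set.univ ∧ ∀ x y : α, sup x y ∈ F → x ∈ F ∨ y ∈ F

/-- A minimal prime implication filter. -/
def IsMinimalPrime (F : Set α) : Prop :=
  IsPrime F ∧ ∀ G : Set α, IsPrime G → G ⊆ F → G = F

/-- A maximal proper implication filter. -/
def IsMaximal (F : Set α) : Prop :=
  IsImpFilter F ∧ F ≠ Set.univ ∧
    ∀ G : Set α, IsImpFilter G → G ≠ Set.univ → F ⊆ G → G = F

/-- A counit: `u < 1` joining to `1` with some `v < 1`. -/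
def IsCounit (u : α) : Prop :=
  lt u (one α) ∧ ∃ v : α, lt v (one α) ∧ sup u v = one α

/-- The implication filter generated by a set. -/
def gen (S : Set α) : Set α := ⋂₀ {F : Set α | IsImpFilter F ∧ S ⊆ F}

/-- The Conrad filter: the implication filter generated by all counits. -/
def conrad (α : Type*) [MV α] : Set α := gen {u : α | IsCounit u}

/-- The localizing filter `ℓ(P)`, generated by `{x → p : p ∈ P, x ∉ P}`. -/
def locFilter (P : Set α) : Set α :=
  gen {z : α | ∃ x : α, x ∉ P ∧ ∃ p ∈ P, z = imp x p}

end MV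

/-!
Every generator `x → p` of `ℓ(P)` lies in every prime `G ⊆ P`: by prelinearity
`(x → p) ∨ (p → x) = 1`, so `x → p ∈ G` or `p → x ∈ G ⊆ P`, and the latter together with
`p ∈ P` would put `x` in `P`. Hence `ℓ(P) ⊆ G`, which gives `ℓ(P) ⊆ P` and, when `ℓ(P) = P`,
minimality. Conversely, for minimal `P` every `p ∈ P` has some `t ∉ P` with `t ∨ p = 1`,
i.e. `t → p ≤ p`, so `p ∈ ℓ(P)`. Such a `t` exists because otherwise the elements below some
`t ∨ p` with `t ∉ P` form a lattice ideal missing `1`, and a filter maximal among those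
disjoint from it is a prime filter inside `P` that misses `p`.
-/
namespace MV

variable {α : Type*} [MV α]

instance : AddCommMonoid α where
  add_assoc a b c := (MV.add_assoc a b c).symm
  add_comm := MV.add_comm
  add_zero := MV.add_zero
  zero_add a := (MV.add_comm 0 a).trans (MV.add_zero a)
  nsmul := nsmulRec

instance : InvolutiveNeg α where
  neg_neg := MV.neg_neg

theorem add_one (a : α) : a + one α = one α := MV.add_neg_zero a

theorem one_add (a : α) : one α + a = one α := by
  rw [add_comm, add_one]

theorem neg_one : -one α = (0 : α) := neg_neg 0

theorem neg_add_self_eq_one (a : α) : -a + a = one α := by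
  simpa only [neg_one, zero_add, add_one] using MV.luk (one α) a

protected theorem sup_comm (a b : α) : sup a b = sup b a := MV.luk a b

theorem sup_eq_right_of_le {a b : α} (h : le a b) : sup a b = b := by
  change -(imp a b) + b = b
  rw [h, neg_one, zero_add]

theorem le_iff_exists_add {a b : α} : le a b ↔ ∃ z, a + z = b := by
  refine ⟨fun h => ⟨-(-b + a), ?_⟩, fun ⟨z, hz⟩ => ?_⟩
  · rw [add_comm]
    exact (MV.sup_comm b a).trans (sup_eq_right_of_le h)
  · change -a + b = one α
    rw [← hz, MV.add_assoc, neg_add_self_eq_one, one_add]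

instance : PartialOrder α where
  le := le
  le_refl := neg_add_self_eq_one
  le_trans a b c hab hbc := by
    obtain ⟨z, rfl⟩ := le_iff_exists_add.mp hab
    obtain ⟨w, rfl⟩ := le_iff_exists_add.mp hbc
    exact le_iff_exists_add.mpr ⟨z + w, MV.add_assoc a z w⟩
  le_antisymm a b hab hba :=
    (sup_eq_right_of_le hba).symm.trans ((MV.sup_comm b a).trans (sup_eq_right_of_le hab))

protected theorem neg_le_neg_iff {a b : α} : -b ≤ -a ↔ a ≤ b := by
  change -(-b) + -a = one α ↔ -a + b = one α
  rw [neg_neg, add_comm]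

theorem neg_sup_add (a b : α) : -(sup a b) + b = -a + b := by
  change -(-(-a + b) + b) + b = -a + b
  have h : -b + (-a + b) = one α := by rw [add_left_comm, neg_add_self_eq_one, add_one]
  rw [MV.luk (-a + b) b, h, neg_one, zero_add]

protected theorem le_sup_left (a b : α) : le a (sup a b) := by
  change -a + (-(-a + b) + b) = one α
  rw [add_left_comm, neg_add_self_eq_one]

protected theorem sup_le {a b c : α} (ha : le a c) (hb : le b c) : le (sup a b) c := by
  obtain ⟨w, rfl⟩ := le_iff_exists_add.mp hb
  change -(sup a b) + (b + w) = one α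
  rw [MV.add_assoc, neg_sup_add, ← MV.add_assoc]
  exact ha

-- `≤`, `⊔`, `⊓`, `⊤` unfold definitionally to `le`, `sup`, `inf`, `one`, so Mathlib's order
-- API applies to the notions of the statement.
instance : Lattice α where
  sup := sup
  le_sup_left := MV.le_sup_left
  le_sup_right a b := MV.sup_comm a b ▸ MV.le_sup_left b a
  sup_le _ _ _ := MV.sup_le
  inf := inf
  inf_le_left a b := MV.neg_le_neg_iff.mp (by rw [inf, neg_neg]; exact MV.le_sup_left (-a) (-b))
  inf_le_right a b := MV.neg_le_neg_iff.mp (by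
    rw [inf, neg_neg, MV.sup_comm]; exact MV.le_sup_left (-b) (-a))
  le_inf a b c hb hc := MV.neg_le_neg_iff.mp (by
    rw [inf, neg_neg]; exact MV.sup_le (MV.neg_le_neg_iff.mpr hb) (MV.neg_le_neg_iff.mpr hc))

instance : OrderTop α where
  top := one α
  le_top a := add_one (-a)

theorem top_eq_one : (⊤ : α) = one α := rfl

theorem sup_eq_top_iff_imp_le {a b : α} : a ⊔ b = ⊤ ↔ imp a b ≤ b := Iff.rfl

theorem neg_otimes (a b : α) : -(otimes a b) = -a + -b := neg_neg _

protected theorem otimes_comm (a b : α) : otimes a b = otimes b a := by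
  rw [otimes, otimes, add_comm]

protected theorem otimes_assoc (a b c : α) : otimes (otimes a b) c = otimes a (otimes b c) := by
  simp only [otimes, neg_neg, MV.add_assoc]

instance : Std.Commutative (otimes : α → α → α) := ⟨MV.otimes_comm⟩

instance : Std.Associative (otimes : α → α → α) := ⟨MV.otimes_assoc⟩

theorem one_otimes (a : α) : otimes (one α) a = a := by
  rw [otimes, neg_one, zero_add, neg_neg]

theorem otimes_one (a : α) : otimes a (one α) = a := by
  rw [MV.otimes_comm, one_otimes]

theorem otimes_le_iff_le_imp {a b c : α} : otimes a b ≤ c ↔ b ≤ imp a c := by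
  change -(otimes a b) + c = one α ↔ -b + (-a + c) = one α
  rw [neg_otimes, add_left_comm, MV.add_assoc]

theorem otimes_imp_le (a b : α) : otimes a (imp a b) ≤ b := otimes_le_iff_le_imp.mpr le_rfl

theorem otimes_le_left (a b : α) : otimes a b ≤ a :=
  otimes_le_iff_le_imp.mpr (by rw [imp, neg_add_self_eq_one]; exact le_top)

theorem otimes_le_right (a b : α) : otimes a b ≤ b :=
  MV.otimes_comm a b ▸ otimes_le_left b a

theorem otimes_le_otimes_left (a : α) {b c : α} (h : b ≤ c) : otimes a b ≤ otimes a c :=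
  otimes_le_iff_le_imp.mpr (h.trans (otimes_le_iff_le_imp.mp le_rfl))

theorem otimes_le_otimes {a b c d : α} (hab : a ≤ b) (hcd : c ≤ d) : otimes a c ≤ otimes b d :=
  calc otimes a c ≤ otimes a d := otimes_le_otimes_left a hcd
    _ = otimes d a := MV.otimes_comm a d
    _ ≤ otimes d b := otimes_le_otimes_left d hab
    _ = otimes b d := MV.otimes_comm d b

theorem otimes_sup (a b c : α) : otimes a (b ⊔ c) = otimes a b ⊔ otimes a c :=
  le_antisymm
    (otimes_le_iff_le_imp.mpr (sup_le (otimes_le_iff_le_imp.mp le_sup_left)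
      (otimes_le_iff_le_imp.mp le_sup_right)))
    (sup_le (otimes_le_otimes_left a le_sup_left) (otimes_le_otimes_left a le_sup_right))

theorem inf_eq_otimes_imp (a b : α) : a ⊓ b = otimes (imp b a) b := by
  change -(-(-(-a) + -b) + -b) = -(-(-b + a) + -b)
  rw [neg_neg, add_comm a]

theorem otimes_imp_add_eq (a b : α) : otimes (imp (a + b) b) a = otimes b a := by
  have hinf : otimes b a ⊓ a = otimes b a := inf_eq_left.mpr (otimes_le_right b a)
  have hluk : imp a (otimes b a) = imp (a + b) b := by
    change -a + otimes b a = -(a + b) + b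
    rw [add_comm]
    simpa only [otimes, neg_neg] using MV.luk b (-a)
  rwa [inf_eq_otimes_imp, hluk] at hinf

theorem add_otimes_otimes (a b : α) : otimes (a + b) (otimes b a) = otimes b a :=
  calc otimes (a + b) (otimes b a) = otimes (otimes (imp (a + b) b) (a + b)) a := by
        rw [← otimes_imp_add_eq a b, MV.otimes_comm _ (a + b), MV.otimes_assoc]
    _ = otimes b a := by
        rw [← inf_eq_otimes_imp, inf_eq_left.mpr (le_iff_exists_add.mpr ⟨a, add_comm b a⟩)]

theorem add_eq_self_of_otimes_eq {s c : α} (h : otimes s c = c) : s + c = s := by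
  have hinf : -s ⊓ c = 0 := by
    rw [inf_eq_otimes_imp, imp, ← neg_otimes, MV.otimes_comm c s, h, otimes, neg_neg,
      add_comm, neg_add_self_eq_one, neg_one]
  refine le_antisymm ?_ (le_iff_exists_add.mpr ⟨c, rfl⟩)
  change -(s + c) + s = one α
  calc -(s + c) + s = -c ⊔ s := by
        change _ = -(- -c + s) + s
        rw [neg_neg, add_comm c s]
    _ = -(-s ⊓ c) := by
        rw [sup_comm]
        change _ = - -sup (- -s) (-c)
        rw [neg_neg, neg_neg]
        rfl
    _ = one α := by rw [hinf]; rfl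

theorem imp_sup_imp_eq_top (x y : α) : imp x y ⊔ imp y x = ⊤ := by
  have h : imp (imp x y) (imp y x) = imp y x := by
    have := add_eq_self_of_otimes_eq (add_otimes_otimes x (-y))
    rw [otimes, neg_neg, add_comm] at this
    change -(-x + y) + (-y + x) = -y + x
    rwa [add_comm (-y) x, add_comm (-x)]
  rw [sup_eq_top_iff_imp_le, h]

theorem sup_otimes_le (a b c : α) : otimes (a ⊔ b) (a ⊔ c) ≤ a ⊔ otimes b c := by
  rw [otimes_sup, MV.otimes_comm _ c, otimes_sup]
  exact sup_le (le_sup_of_le_left (otimes_le_right _ a))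
    (sup_le (le_sup_of_le_left (otimes_le_right c a)) (le_sup_of_le_right (MV.otimes_comm c b).le))

theorem sup_otimes_eq_top {a b c : α} (hb : a ⊔ b = ⊤) (hc : a ⊔ c = ⊤) : a ⊔ otimes b c = ⊤ :=
  top_le_iff.mp (by simpa only [hb, hc, top_eq_one, one_otimes] using sup_otimes_le a b c)

protected theorem pow_add (a : α) (m n : ℕ) : pow a (m + n) = otimes (pow a m) (pow a n) := by
  induction m with
  | zero => rw [Nat.zero_add, pow, one_otimes]
  | succ m ih => rw [Nat.succ_add, pow, pow, ih, MV.otimes_assoc]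

theorem sup_pow_eq_top_of_sup_eq_top {a b : α} (h : a ⊔ b = ⊤) (n : ℕ) : a ⊔ pow b n = ⊤ := by
  induction n with
  | zero => exact sup_top_eq a
  | succ n ih => exact sup_otimes_eq_top h ih

theorem pow_sup_pow_eq_top {a b : α} (h : a ⊔ b = ⊤) (m n : ℕ) : pow a m ⊔ pow b n = ⊤ := by
  have hb := sup_pow_eq_top_of_sup_eq_top h n
  rw [sup_comm] at hb ⊢
  exact sup_pow_eq_top_of_sup_eq_top hb m

namespace IsImpFilter

variable {F : Set α}

theorem one_mem (hF : IsImpFilter F) : one α ∈ F := hF.1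

theorem mem_of_le (hF : IsImpFilter F) {a b : α} (ha : a ∈ F) (hab : a ≤ b) : b ∈ F :=
  hF.2.1 a ha b hab

theorem otimes_mem (hF : IsImpFilter F) {a b : α} (ha : a ∈ F) (hb : b ∈ F) : otimes a b ∈ F :=
  hF.2.2.2 a ha b hb

theorem mem_of_imp_mem (hF : IsImpFilter F) {a b : α} (ha : a ∈ F) (hab : imp a b ∈ F) : b ∈ F :=
  hF.mem_of_le (hF.otimes_mem ha hab) (otimes_imp_le a b)

theorem of_otimes_mem (hone : one α ∈ F) (hle : ∀ a ∈ F, ∀ b, a ≤ b → b ∈ F)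
    (hotimes : ∀ a ∈ F, ∀ b ∈ F, otimes a b ∈ F) : IsImpFilter F :=
  ⟨hone, hle, fun a ha b hb => hle _ (hotimes a ha b hb) _ (le_inf (otimes_le_left a b)
    (otimes_le_right a b)), hotimes⟩

end IsImpFilter

theorem isImpFilter_singleton_one : IsImpFilter {one α} := by
  refine .of_otimes_mem rfl ?_ ?_
  · rintro a rfl b hb
    exact top_le_iff.mp hb
  · rintro a rfl b rfl
    exact one_otimes _

theorem isImpFilter_sUnion_of_isChain {c : Set (Set α)} (hc : ∀ F ∈ c, IsImpFilter F)
    (hchain : IsChain (· ⊆ ·) c) (hne : c.Nonempty) : IsImpFilter (⋃₀ c) := by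
  refine .of_otimes_mem ?_ ?_ ?_
  · obtain ⟨F, hF⟩ := hne
    exact ⟨F, hF, (hc F hF).one_mem⟩
  · rintro a ⟨F, hF, ha⟩ b hab
    exact ⟨F, hF, (hc F hF).mem_of_le ha hab⟩
  · rintro a ⟨F, hF, ha⟩ b ⟨G, hG, hb⟩
    rcases hchain.total hF hG with hFG | hGF
    · exact ⟨G, hG, (hc G hG).otimes_mem (hFG ha) hb⟩
    · exact ⟨F, hF, (hc F hF).otimes_mem ha (hGF hb)⟩

theorem isImpFilter_gen (S : Set α) : IsImpFilter (gen S) :=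
  ⟨fun _ hF => hF.1.one_mem,
    fun _ ha _ hab F hF => hF.1.mem_of_le (ha F hF) hab,
    fun _ ha _ hb F hF => hF.1.2.2.1 _ (ha F hF) _ (hb F hF),
    fun _ ha _ hb F hF => hF.1.otimes_mem (ha F hF) (hb F hF)⟩

theorem subset_gen (S : Set α) : S ⊆ gen S :=
  fun _ ha _ hF => hF.2 ha

theorem gen_subset {S F : Set α} (hF : IsImpFilter F) (hSF : S ⊆ F) : gen S ⊆ F :=
  Set.sInter_subset_of_mem ⟨hF, hSF⟩

def adjoin (F : Set α) (a : α) : Set α := {z | ∃ q ∈ F, ∃ n, otimes q (pow a n) ≤ z}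

theorem IsImpFilter.adjoin {F : Set α} (hF : IsImpFilter F) (a : α) :
    IsImpFilter (adjoin F a) := by
  refine .of_otimes_mem ⟨one α, hF.one_mem, 0, le_top⟩ ?_ ?_
  · rintro z ⟨q, hq, n, hz⟩ w hzw
    exact ⟨q, hq, n, hz.trans hzw⟩
  · rintro z ⟨q, hq, m, hz⟩ w ⟨r, hr, n, hw⟩
    refine ⟨otimes q r, hF.otimes_mem hq hr, m + n, ?_⟩
    calc otimes (otimes q r) (pow a (m + n))
        = otimes (otimes q (pow a m)) (otimes r (pow a n)) := by rw [MV.pow_add]; ac_rfl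
      _ ≤ otimes z w := otimes_le_otimes hz hw

theorem subset_adjoin (F : Set α) (a : α) : F ⊆ adjoin F a :=
  fun q hq => ⟨q, hq, 0, (otimes_one q).le⟩

theorem mem_adjoin_self {F : Set α} (hF : one α ∈ F) (a : α) : a ∈ adjoin F a :=
  ⟨one α, hF, 1, by rw [one_otimes, pow, pow, otimes_one]⟩

theorem IsImpFilter.isPrime_of_imp_mem_or {F : Set α} (hF : IsImpFilter F) (hne : F ≠ Set.univ)
    (h : ∀ x y, imp x y ∈ F ∨ imp y x ∈ F) : IsPrime F := by
  refine ⟨hF, hne, fun x y hxy => ?_⟩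
  rcases h x y with hxy' | hyx
  · exact Or.inr (hF.mem_of_imp_mem hxy' hxy)
  · exact Or.inl (hF.mem_of_imp_mem hyx (MV.sup_comm x y ▸ hxy : sup y x ∈ F))

theorem IsPrime.imp_mem_or {F : Set α} (hF : IsPrime F) (x y : α) : imp x y ∈ F ∨ imp y x ∈ F :=
  hF.2.2 _ _ ((imp_sup_imp_eq_top x y).symm ▸ hF.1.one_mem : imp x y ⊔ imp y x ∈ F)

theorem IsPrime.imp_mem_of_subset {G P : Set α} (hG : IsPrime G) (hGP : G ⊆ P)
    (hP : IsImpFilter P) {x q : α} (hx : x ∉ P) (hq : q ∈ P) : imp x q ∈ G :=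
  (hG.imp_mem_or x q).resolve_right fun h => hx (hP.mem_of_imp_mem hq (hGP h))

theorem locFilter_subset {G P : Set α} (hG : IsPrime G) (hGP : G ⊆ P) (hP : IsImpFilter P) :
    locFilter P ⊆ G :=
  gen_subset hG.1 fun _ ⟨_, hx, _, hq, hz⟩ => hz ▸ hG.imp_mem_of_subset hGP hP hx hq

section PrimeFilterTheorem

variable {M D : Set α}

theorem exists_otimes_pow_mem_of_maximal (hM : Maximal (fun Q => IsImpFilter Q ∧ Disjoint Q D) M)
    (hD : IsLowerSet D) {x : α} (hx : x ∉ M) : ∃ q ∈ M, ∃ n, otimes q (pow x n) ∈ D := by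
  have hnot : ¬Disjoint (adjoin M x) D := fun hdisj =>
    hx (hM.2 ⟨hM.1.1.adjoin x, hdisj⟩ (subset_adjoin M x) (mem_adjoin_self hM.1.1.one_mem x))
  obtain ⟨z, ⟨q, hq, n, hz⟩, hzD⟩ := Set.not_disjoint_iff.mp hnot
  exact ⟨q, hq, n, hD hz hzD⟩

theorem isPrime_of_maximal (hM : Maximal (fun Q => IsImpFilter Q ∧ Disjoint Q D) M)
    (hDl : IsLowerSet D) (hDs : SupClosed D) (hDne : D.Nonempty) : IsPrime M := by
  obtain ⟨hMf, hMD⟩ := hM.1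
  refine hMf.isPrime_of_imp_mem_or ?_ fun x y => ?_
  · obtain ⟨d, hd⟩ := hDne
    exact fun h => Set.disjoint_left.mp hMD (h ▸ Set.mem_univ d) hd
  -- If neither `x → y` nor `y → x` is in `M`, both adjoins meet `D`; prelinearity then
  -- puts an element of `M` below the join of the two witnesses.
  by_contra! h
  obtain ⟨q, hq, m, hqD⟩ := exists_otimes_pow_mem_of_maximal hM hDl h.1
  obtain ⟨r, hr, n, hrD⟩ := exists_otimes_pow_mem_of_maximal hM hDl h.2
  refine Set.disjoint_left.mp hMD (hMf.otimes_mem hq hr) (hDl ?_ (hDs hqD hrD))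
  calc otimes q r
      = otimes (otimes q r) (pow (imp x y) m ⊔ pow (imp y x) n) := by
        rw [pow_sup_pow_eq_top (imp_sup_imp_eq_top x y), top_eq_one, otimes_one]
    _ = otimes (otimes q r) (pow (imp x y) m) ⊔ otimes (otimes q r) (pow (imp y x) n) :=
        otimes_sup _ _ _
    _ ≤ otimes q (pow (imp x y) m) ⊔ otimes r (pow (imp y x) n) :=
        sup_le_sup (otimes_le_otimes (otimes_le_left q r) le_rfl)
          (otimes_le_otimes (otimes_le_right q r) le_rfl)

theorem exists_isPrime_superset_disjoint {F : Set α} (hF : IsImpFilter F) (hFD : Disjoint F D)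
    (hDl : IsLowerSet D) (hDs : SupClosed D) (hDne : D.Nonempty) :
    ∃ M, IsPrime M ∧ F ⊆ M ∧ Disjoint M D := by
  obtain ⟨M, hFM, hM⟩ := zorn_subset_nonempty {Q | IsImpFilter Q ∧ Disjoint Q D}
    (fun c hc hchain hne => ⟨⋃₀ c,
      ⟨isImpFilter_sUnion_of_isChain (fun F hF => (hc hF).1) hchain hne,
        Set.disjoint_sUnion_left.mpr fun F hF => (hc hF).2⟩,
      fun _ => Set.subset_sUnion_of_mem⟩) F ⟨hF, hFD⟩
  exact ⟨M, isPrime_of_maximal hM hDl hDs hDne, hFM, hM.1.2⟩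

end PrimeFilterTheorem

theorem IsMinimalPrime.exists_sup_eq_top_of_mem {P : Set α} (hP : IsMinimalPrime P) {p : α}
    (hp : p ∈ P) : ∃ t ∉ P, t ⊔ p = ⊤ := by
  by_contra! h
  set D := {w | ∃ t ∉ P, w ≤ t ⊔ p}
  have hDl : IsLowerSet D := fun a b hba ⟨t, ht, hat⟩ => ⟨t, ht, hba.trans hat⟩
  have hDs : SupClosed D := by
    rintro a ⟨s, hs, has⟩ b ⟨t, ht, hbt⟩
    refine ⟨s ⊔ t, fun hst => (hP.1.2.2 s t hst).elim hs ht, sup_le ?_ ?_⟩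
    · exact has.trans (sup_le_sup_right le_sup_left p)
    · exact hbt.trans (sup_le_sup_right le_sup_right p)
  obtain ⟨t₀, ht₀⟩ := (Set.ne_univ_iff_exists_notMem P).mp hP.1.2.1
  have hpD : p ∈ D := ⟨t₀, ht₀, le_sup_right⟩
  have hD : Disjoint {one α} D :=
    Set.disjoint_singleton_left.mpr fun ⟨t, ht, hle⟩ => h t ht (top_le_iff.mp hle)
  obtain ⟨M, hM, -, hMD⟩ :=
    exists_isPrime_superset_disjoint isImpFilter_singleton_one hD hDl hDs ⟨p, hpD⟩
  have hMP : M ⊆ P := fun q hq =>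
    by_contra fun hqP => Set.disjoint_left.mp hMD hq ⟨q, hqP, le_sup_left⟩
  exact Set.disjoint_left.mp hMD (hP.2 M hM hMP ▸ hp) hpD

end MV

open MV
/-- A prime implication filter is minimal prime iff `ℓ(P) = P`. -/
theorem minimal_prime_iff_locFilter_eq {α : Type*} [MV α] (P : Set α) (hP : IsPrime P) :
    IsMinimalPrime P ↔ locFilter P = P := by
  refine ⟨fun hmin => (locFilter_subset hP subset_rfl hP.1).antisymm fun p hp => ?_,
    fun hloc => ⟨hP, fun G hG hGP => hGP.antisymm (hloc ▸ locFilter_subset hG hGP hP.1)⟩⟩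
  obtain ⟨t, ht, htp⟩ := hmin.exists_sup_eq_top_of_mem hp
  exact (isImpFilter_gen _).mem_of_le (subset_gen _ ⟨t, ht, p, hp, rfl⟩)
    (sup_eq_top_iff_imp_le.mp htp)
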